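/- arXiv:1712.00965 — 2 statements merged into one kernel-verified Lean document; each statement's English description precedes it below -/
import Mathlib

section
/- Let ζ_i, ζ_j > 0, b_i(0), b_j(0) > 0, α ≥ 0, b_i(t) = b_i(0)·exp(ζ_i t), b_j(t) = b_j(0)·exp(ζ_j t). Then for every t ∈ ℝ the quantity e^{−αt} times the double integral of e^{α t_2}·(b_i(t_1)b_j(t_2) − b_i(t_2)b_j(t_1)) over the region {(t_1,t_2) ∈ ℝ² : t_1 < t_2 < t} (with respect to Lebesgue measure) converges and equals ((ζ_j − ζ_i)/(ζ_i + ζ_j + α)) · b_i(t) b_j(t) / (ζ_i ζ_j). -/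
/-!
The integrand is `bi0 * bj0 * (exp (ζi t₁ + (ζj + α) t₂) - exp (ζj t₁ + (ζi + α) t₂))`, so it
suffices to integrate `exp (a t₁ + b t₂)` over the triangle `t₁ < t₂ < t`. By Fubini (integrating
`t₁` first) this gives `∫_{t₂ < t} exp ((a + b) t₂) / a = exp ((a + b) t) / (a (a + b))`, finite as
soon as `a > 0` and `a + b > 0`. The two terms then combine to `(1/ζi - 1/ζj) e^{(ζi+ζj+α)t} / (ζi+ζj+α)`.
-/

open Real MeasureTheory Set

def triangleBelow (t : ℝ) : Set (ℝ × ℝ) := {p | p.1 < p.2 ∧ p.2 < t}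

theorem measurableSet_triangleBelow (t : ℝ) : MeasurableSet (triangleBelow t) :=
  (measurableSet_lt measurable_fst measurable_snd).inter
    (measurableSet_lt measurable_snd measurable_const)

section Indicator

variable {M : Type*} [Zero M]

theorem indicator_triangleBelow_of_lt (f : ℝ × ℝ → M) {t y : ℝ} (hy : y < t) (x : ℝ) :
    (triangleBelow t).indicator f (x, y) = (Iio y).indicator (fun x => f (x, y)) x := by
  by_cases hx : x < y
  · rw [indicator_of_mem (show (x, y) ∈ triangleBelow t from ⟨hx, hy⟩),
      indicator_of_mem (mem_Iio.2 hx)]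
  · rw [indicator_of_notMem (fun h => hx h.1), indicator_of_notMem (notMem_Iio.2 (not_lt.1 hx))]

theorem indicator_triangleBelow_of_le (f : ℝ × ℝ → M) {t y : ℝ} (hy : t ≤ y) (x : ℝ) :
    (triangleBelow t).indicator f (x, y) = 0 :=
  indicator_of_notMem (fun h => hy.not_gt h.2) _

end Indicator

section Fubini

variable {E : Type*} [NormedAddCommGroup E]

theorem integral_indicator_triangleBelow_section [NormedSpace ℝ E] (f : ℝ × ℝ → E) (t y : ℝ) :
    ∫ x, (triangleBelow t).indicator f (x, y) =
      (Iio t).indicator (fun y => ∫ x in Iio y, f (x, y)) y := by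
  rcases lt_or_ge y t with hy | hy
  · simp only [indicator_triangleBelow_of_lt f hy, integral_indicator measurableSet_Iio,
      indicator_of_mem (mem_Iio.2 hy)]
  · simp only [indicator_triangleBelow_of_le f hy, integral_zero,
      indicator_of_notMem (notMem_Iio.2 hy)]

theorem integrableOn_triangleBelow {f : ℝ × ℝ → E} {t : ℝ} (hf : AEStronglyMeasurable f)
    (hsec : ∀ y < t, IntegrableOn (fun x => f (x, y)) (Iio y))
    (hint : IntegrableOn (fun y => ∫ x in Iio y, ‖f (x, y)‖) (Iio t)) :
    IntegrableOn f (triangleBelow t) := by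
  have hs := measurableSet_triangleBelow t
  have hmeas := hf.indicator hs
  rw [← integrable_indicator_iff hs]
  rw [Measure.volume_eq_prod] at hmeas ⊢
  refine (integrable_prod_iff' hmeas).2 ⟨ae_of_all _ fun y => ?_, ?_⟩
  · rcases lt_or_ge y t with hy | hy
    · simp only [indicator_triangleBelow_of_lt f hy]
      exact (integrable_indicator_iff measurableSet_Iio).2 (hsec y hy)
    · simp only [indicator_triangleBelow_of_le f hy]
      exact integrable_zero _ _ _
  · simp only [norm_indicator_eq_indicator_norm, integral_indicator_triangleBelow_section]
    exact (integrable_indicator_iff measurableSet_Iio).2 hint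

theorem setIntegral_triangleBelow [NormedSpace ℝ E] {f : ℝ × ℝ → E} {t : ℝ}
    (hf : IntegrableOn f (triangleBelow t)) :
    ∫ p in triangleBelow t, f p = ∫ y in Iio t, ∫ x in Iio y, f (x, y) := by
  have hs := measurableSet_triangleBelow t
  rw [← integrable_indicator_iff hs, Measure.volume_eq_prod] at hf
  rw [← integral_indicator hs, Measure.volume_eq_prod, integral_prod_symm _ hf]
  simp only [integral_indicator_triangleBelow_section]
  exact integral_indicator measurableSet_Iio

end Fubini

theorem integral_exp_mul_add_Iio {a : ℝ} (ha : 0 < a) (b y : ℝ) :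
    ∫ x in Iio y, exp (a * x + b * y) = exp ((a + b) * y) / a := by
  simp only [exp_add, integral_mul_const, setIntegral_congr_set Iio_ae_eq_Iic,
    integral_exp_mul_Iic ha, add_mul]
  ring

theorem integrableOn_exp_triangleBelow {a b : ℝ} (ha : 0 < a) (hab : 0 < a + b) (t : ℝ) :
    IntegrableOn (fun p : ℝ × ℝ => exp (a * p.1 + b * p.2)) (triangleBelow t) := by
  refine integrableOn_triangleBelow (by fun_prop) (fun y _ => ?_) ?_
  · simp only [exp_add]
    exact ((integrableOn_exp_mul_Iic ha y).mono_set Iio_subset_Iic_self).mul_const _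
  · simp only [norm_of_nonneg (exp_nonneg _), integral_exp_mul_add_Iio ha]
    exact ((integrableOn_exp_mul_Iic hab t).mono_set Iio_subset_Iic_self).div_const _

theorem setIntegral_exp_triangleBelow {a b : ℝ} (ha : 0 < a) (hab : 0 < a + b) (t : ℝ) :
    ∫ p in triangleBelow t, exp (a * p.1 + b * p.2) = exp ((a + b) * t) / (a * (a + b)) := by
  rw [setIntegral_triangleBelow (integrableOn_exp_triangleBelow ha hab t)]
  simp only [integral_exp_mul_add_Iio ha, integral_div, setIntegral_congr_set Iio_ae_eq_Iic,
    integral_exp_mul_Iic hab]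
  field_simp

theorem double_integral_pfaffian_entry_generalized_general
    (ζi ζj bi0 bj0 α : ℝ) (hζi : 0 < ζi) (hζj : 0 < ζj)
    (hα : 0 ≤ α) (t : ℝ) :
    IntegrableOn
      (fun p : ℝ × ℝ =>
        Real.exp (α * p.2) *
          (bi0 * Real.exp (ζi * p.1) * (bj0 * Real.exp (ζj * p.2)) -
            bi0 * Real.exp (ζi * p.2) * (bj0 * Real.exp (ζj * p.1))))
      {p : ℝ × ℝ | p.1 < p.2 ∧ p.2 < t} volume ∧
    Real.exp (-(α * t)) *
        ∫ p in {p : ℝ × ℝ | p.1 < p.2 ∧ p.2 < t},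
          Real.exp (α * p.2) *
            (bi0 * Real.exp (ζi * p.1) * (bj0 * Real.exp (ζj * p.2)) -
              bi0 * Real.exp (ζi * p.2) * (bj0 * Real.exp (ζj * p.1)))
      = (ζj - ζi) / (ζi + ζj + α) *
          (bi0 * Real.exp (ζi * t) * (bj0 * Real.exp (ζj * t))) / (ζi * ζj) := by
  have hij : 0 < ζi + (ζj + α) := by linarith
  have hji : 0 < ζj + (ζi + α) := by linarith
  have hsplit : (fun p : ℝ × ℝ =>
      exp (α * p.2) * (bi0 * exp (ζi * p.1) * (bj0 * exp (ζj * p.2)) -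
        bi0 * exp (ζi * p.2) * (bj0 * exp (ζj * p.1)))) =
      fun p => bi0 * bj0 *
        (exp (ζi * p.1 + (ζj + α) * p.2) - exp (ζj * p.1 + (ζi + α) * p.2)) := by
    funext p
    simp only [add_mul, exp_add]
    ring
  have hi := integrableOn_exp_triangleBelow hζi hij t
  have hj := integrableOn_exp_triangleBelow hζj hji t
  rw [show {p : ℝ × ℝ | p.1 < p.2 ∧ p.2 < t} = triangleBelow t from rfl, hsplit]
  refine ⟨(hi.sub hj).const_mul _, ?_⟩
  rw [integral_const_mul, integral_sub hi hj, setIntegral_exp_triangleBelow hζi hij,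
    setIntegral_exp_triangleBelow hζj hji]
  simp only [add_mul, exp_add, exp_neg]
  field_simp
  ring

theorem double_integral_pfaffian_entry_generalized
    (ζi ζj bi0 bj0 α : ℝ) (hζi : 0 < ζi) (hζj : 0 < ζj)
    (hbi : 0 < bi0) (hbj : 0 < bj0) (hα : 0 ≤ α) (t : ℝ) :
    IntegrableOn
      (fun p : ℝ × ℝ =>
        Real.exp (α * p.2) *
          (bi0 * Real.exp (ζi * p.1) * (bj0 * Real.exp (ζj * p.2)) -
            bi0 * Real.exp (ζi * p.2) * (bj0 * Real.exp (ζj * p.1))))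
      {p : ℝ × ℝ | p.1 < p.2 ∧ p.2 < t} volume ∧
    Real.exp (-(α * t)) *
        ∫ p in {p : ℝ × ℝ | p.1 < p.2 ∧ p.2 < t},
          Real.exp (α * p.2) *
            (bi0 * Real.exp (ζi * p.1) * (bj0 * Real.exp (ζj * p.2)) -
              bi0 * Real.exp (ζi * p.2) * (bj0 * Real.exp (ζj * p.1)))
      = (ζj - ζi) / (ζi + ζj + α) *
          (bi0 * Real.exp (ζi * t) * (bj0 * Real.exp (ζj * t))) / (ζi * ζj) :=
  double_integral_pfaffian_entry_generalized_general ζi ζj bi0 bj0 α hζi hζj hα t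
end

section
/- With the data below, for every integer k with 0 ≤ k ≤ n and every t ∈ ℝ, the following two identities hold: Σ_{j=1}^{k} W_{j−1}(t) / (U_j(t) U_{j−1}(t)) = V_{k−1}(t) / U_k(t), and Σ_{j=k+1}^{n} Z_j(t) / (U_j(t) U_{j−1}(t)) = T_{k+1}(t) / U_k(t). -/
open Finset Real

def idxSets (n : ℕ) (k : ℤ) : Finset (Finset (Fin n)) :=
  (Finset.univ : Finset (Fin n)).powerset.filter (fun J => (J.card : ℤ) = k)

noncomputable def Del {n : ℕ} (ζ : Fin n → ℝ) (J : Finset (Fin n)) : ℝ :=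
  ∏ i ∈ J, ∏ j ∈ J.filter (fun j => i < j), (ζ j - ζ i)

noncomputable def Gam {n : ℕ} (ζ : Fin n → ℝ) (J : Finset (Fin n)) : ℝ :=
  ∏ i ∈ J, ∏ j ∈ J.filter (fun j => i < j), (ζ j + ζ i)

noncomputable def Tf {n : ℕ} (ζ b0 : Fin n → ℝ) (k : ℤ) (t : ℝ) : ℝ :=
  ∑ J ∈ idxSets n k,
    (Del ζ J) ^ 2 / ((∏ j ∈ J, ζ j) * Gam ζ J) * ∏ j ∈ J, b0 j * Real.exp (t / ζ j)

noncomputable def Uf {n : ℕ} (ζ b0 : Fin n → ℝ) (k : ℤ) (t : ℝ) : ℝ :=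
  ∑ J ∈ idxSets n k,
    (Del ζ J) ^ 2 / Gam ζ J * ∏ j ∈ J, b0 j * Real.exp (t / ζ j)

noncomputable def Vf {n : ℕ} (ζ b0 : Fin n → ℝ) (k : ℤ) (t : ℝ) : ℝ :=
  ∑ J ∈ idxSets n k,
    (Del ζ J) ^ 2 / Gam ζ J * (∏ j ∈ J, ζ j) * ∏ j ∈ J, b0 j * Real.exp (t / ζ j)

noncomputable def Wf {n : ℕ} (ζ b0 : Fin n → ℝ) (k : ℤ) (t : ℝ) : ℝ :=
  Vf ζ b0 k t * Uf ζ b0 k t - Vf ζ b0 (k - 1) t * Uf ζ b0 (k + 1) t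

noncomputable def Zf {n : ℕ} (ζ b0 : Fin n → ℝ) (k : ℤ) (t : ℝ) : ℝ :=
  Tf ζ b0 k t * Uf ζ b0 k t - Tf ζ b0 (k + 1) t * Uf ζ b0 (k - 1) t

/-!
Both sums telescope: `W_j / (U_{j+1} U_j) = V_j / U_{j+1} - V_{j-1} / U_j` and
`Z_j / (U_j U_{j-1}) = T_j / U_{j-1} - T_{j+1} / U_j`, and the boundary terms `V_{-1}` and
`T_{n+1}` are empty sums. The denominators are legitimate because `U_k`, `0 ≤ k ≤ n`, is a
nonempty sum of positive terms: `Δ_J² > 0` as the `ζ_j` are distinct, and `Γ_J > 0`.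
-/

theorem sum_range_cross_div_telescope {K : Type*} [Field K] (a u : ℤ → K) (k : ℕ)
    (hu : ∀ j : ℕ, j ≤ k → u j ≠ 0) :
    ∑ j ∈ range k, (a j * u j - a (j - 1) * u (j + 1)) / (u (j + 1) * u j)
      = a (k - 1) / u k - a (-1) / u 0 := by
  have hterm : ∀ j ∈ range k, (a j * u j - a (j - 1) * u (j + 1)) / (u (j + 1) * u j)
      = a ((j + 1 : ℕ) - 1) / u (j + 1 : ℕ) - a ((j : ℕ) - 1) / u j := by
    intro j hj
    have hj : j < k := mem_range.mp hj
    have h₀ := hu j hj.le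
    have h₁ : u (j + 1) ≠ 0 := by exact_mod_cast hu (j + 1) hj
    push_cast
    rw [add_sub_cancel_right]
    field_simp
  rw [sum_congr rfl hterm, sum_range_sub (fun m : ℕ => a ((m : ℤ) - 1) / u m)]
  norm_num

theorem sum_Icc_cross_div_telescope {K : Type*} [Field K] (c u : ℤ → K) {k n : ℕ} (hkn : k ≤ n)
    (hu : ∀ j : ℕ, k ≤ j → j ≤ n → u j ≠ 0) :
    ∑ j ∈ Icc (k + 1) n, (c j * u j - c (j + 1) * u (j - 1)) / (u j * u (j - 1))
      = c (k + 1) / u k - c (n + 1) / u n := by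
  have hterm : ∀ j ∈ Icc (k + 1) n, (c j * u j - c (j + 1) * u (j - 1)) / (u j * u (j - 1))
      = -(c (j + 1 : ℕ) / u ((j + 1 : ℕ) - 1)) - -(c j / u ((j : ℕ) - 1)) := by
    intro j hj
    obtain ⟨hkj, hjn⟩ := mem_Icc.mp hj
    have h₀ := hu j (by omega) hjn
    have h₁ : u ((j : ℤ) - 1) ≠ 0 := by
      have := hu (j - 1) (by omega) (by omega)
      rwa [Nat.cast_sub (by omega), Nat.cast_one] at this
    push_cast
    rw [add_sub_cancel_right]
    field_simp
    ring
  rw [sum_congr rfl hterm, ← Ico_add_one_right_eq_Icc,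
    sum_Ico_sub (fun m : ℕ => -(c m / u ((m : ℤ) - 1))) (by omega)]
  push_cast
  simp only [add_sub_cancel_right]
  ring

section Positivity

variable {n : ℕ} {ζ b0 : Fin n → ℝ}

theorem Del_pos (hζmono : StrictMono ζ) (J : Finset (Fin n)) : 0 < Del ζ J :=
  prod_pos fun _ _ => prod_pos fun _ hj => sub_pos.mpr (hζmono (mem_filter.mp hj).2)

theorem Gam_pos (hζpos : ∀ j, 0 < ζ j) (J : Finset (Fin n)) : 0 < Gam ζ J :=
  prod_pos fun i _ => prod_pos fun j _ => add_pos (hζpos j) (hζpos i)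

theorem idxSets_nonempty {k : ℕ} (hk : k ≤ n) : (idxSets n k).Nonempty := by
  obtain ⟨J, -, hJ⟩ := exists_subset_card_eq (s := (univ : Finset (Fin n))) (by simpa using hk)
  exact ⟨J, by simp [idxSets, hJ]⟩

theorem idxSets_of_neg {k : ℤ} (hk : k < 0) : idxSets n k = ∅ := by
  ext J
  simp only [idxSets, mem_filter, notMem_empty, iff_false, not_and]
  omega

theorem idxSets_of_lt {k : ℤ} (hk : n < k) : idxSets n k = ∅ := by
  ext J
  have := card_le_card (subset_univ J)
  simp only [card_univ, Fintype.card_fin] at this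
  simp only [idxSets, mem_filter, notMem_empty, iff_false, not_and]
  omega

theorem Uf_pos (hζpos : ∀ j, 0 < ζ j) (hζmono : StrictMono ζ) (hb : ∀ j, 0 < b0 j) {k : ℕ}
    (hk : k ≤ n) (t : ℝ) : 0 < Uf ζ b0 k t := by
  refine sum_pos (fun J _ => ?_) (idxSets_nonempty hk)
  have := Del_pos hζmono J
  have := Gam_pos hζpos J
  have : 0 < ∏ j ∈ J, b0 j * exp (t / ζ j) := prod_pos fun j _ => by have := hb j; positivity
  positivity

end Positivity

theorem sum_WZ_identities_general {n : ℕ} (ζ b0 : Fin n → ℝ)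
    (hζpos : ∀ j, 0 < ζ j) (hζmono : StrictMono ζ) (hb : ∀ j, 0 < b0 j)
    (k : ℕ) (hk : k ≤ n) (t : ℝ) :
    (∑ j ∈ Finset.range k, Wf ζ b0 (j : ℤ) t / (Uf ζ b0 ((j : ℤ) + 1) t * Uf ζ b0 (j : ℤ) t))
        = Vf ζ b0 ((k : ℤ) - 1) t / Uf ζ b0 (k : ℤ) t ∧
    (∑ j ∈ Finset.Icc (k + 1) n, Zf ζ b0 (j : ℤ) t / (Uf ζ b0 (j : ℤ) t * Uf ζ b0 ((j : ℤ) - 1) t))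
        = Tf ζ b0 ((k : ℤ) + 1) t / Uf ζ b0 (k : ℤ) t := by
  have hU : ∀ j : ℕ, j ≤ n → Uf ζ b0 j t ≠ 0 := fun j hj => (Uf_pos hζpos hζmono hb hj t).ne'
  have hV : Vf ζ b0 (-1) t = 0 := by simp [Vf, idxSets_of_neg]
  have hT : Tf ζ b0 (n + 1) t = 0 := by simp [Tf, idxSets_of_lt]
  constructor
  · have h := sum_range_cross_div_telescope (Vf ζ b0 · t) (Uf ζ b0 · t) k
      fun j hj => hU j (hj.trans hk)
    simpa only [Wf, hV, zero_div, sub_zero] using h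
  · have h := sum_Icc_cross_div_telescope (Tf ζ b0 · t) (Uf ζ b0 · t) hk
      fun j _ hj => hU j hj
    simpa only [Zf, hT, zero_div, sub_zero] using h

theorem sum_WZ_identities {n : ℕ} (hn : 1 ≤ n) (ζ b0 : Fin n → ℝ)
    (hζpos : ∀ j, 0 < ζ j) (hζmono : StrictMono ζ) (hb : ∀ j, 0 < b0 j)
    (k : ℕ) (hk : k ≤ n) (t : ℝ) :
    (∑ j ∈ Finset.range k, Wf ζ b0 (j : ℤ) t / (Uf ζ b0 ((j : ℤ) + 1) t * Uf ζ b0 (j : ℤ) t))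
        = Vf ζ b0 ((k : ℤ) - 1) t / Uf ζ b0 (k : ℤ) t ∧
    (∑ j ∈ Finset.Icc (k + 1) n, Zf ζ b0 (j : ℤ) t / (Uf ζ b0 (j : ℤ) t * Uf ζ b0 ((j : ℤ) - 1) t))
        = Tf ζ b0 ((k : ℤ) + 1) t / Uf ζ b0 (k : ℤ) t :=
  sum_WZ_identities_general ζ b0 hζpos hζmono hb k hk t
end
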